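/- Every graph G in the family 𝓑 contains at most one vertex of degree 1, and no two adjacent vertices of G both have degree 2 in G. -/

import Mathlib

namespace PaperIndepDom

open SimpleGraph

/-- The degree of a vertex `v` in a graph `G`. -/
noncomputable def deg {V : Type*} (G : SimpleGraph V) (v : V) : ℕ :=
  (G.neighborSet v).ncard

/-- The base graph `B₁`: a copy of `K_{2,3}` (vertices `0, 1` forming the partite set of
size 2, vertices `2, 3, 4` forming the partite set of size 3) together with a new root
vertex `5` joined to the degree-2 vertex `2`. -/
def baseGraph : SimpleGraph (Fin 6) :=
  SimpleGraph.fromRel (fun i j =>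
    (i.val ≤ 1 ∧ 2 ≤ j.val ∧ j.val ≤ 4) ∨ (i = 2 ∧ j = 5))

/-- The graph obtained from `G` by adding a vertex-disjoint copy of `K_{2,3}`
(on the vertex set `Fin 2 ⊕ Fin 3`) together with an edge joining the vertex `v'` of `G`
to the degree-2 vertex `Sum.inr t` of the added copy of `K_{2,3}` (operation `O₁`). -/
def addK23 {V : Type*} (G : SimpleGraph V) (v' : V) (t : Fin 3) :
    SimpleGraph (V ⊕ (Fin 2 ⊕ Fin 3)) :=
  SimpleGraph.fromRel (fun x y =>
    (∃ a b, G.Adj a b ∧ x = Sum.inl a ∧ y = Sum.inl b) ∨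
    (∃ i j, x = Sum.inr (Sum.inl i) ∧ y = Sum.inr (Sum.inr j)) ∨
    (x = Sum.inl v' ∧ y = Sum.inr (Sum.inr t)))

/-- `FamilyB G` means that `G` belongs to the family `𝓑`: the smallest family of graphs
(closed under isomorphism) that contains the base graph and is closed under the
operation `O₁`. -/
inductive FamilyB : ∀ {V : Type}, SimpleGraph V → Prop
  | base : FamilyB baseGraph
  | extend {V : Type} {G : SimpleGraph V} (hG : FamilyB G) (v' : V)
      (hv' : deg G v' ≤ 2) (t : Fin 3) : FamilyB (addK23 G v' t)
  | iso {V W : Type} {G : SimpleGraph V} {H : SimpleGraph W}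
      (e : G ≃g H) (hG : FamilyB G) : FamilyB H

/-!
The two claims are proved by induction over `𝓑` together with two more degree conditions:
every vertex has degree at least 1, and the neighbour of a vertex of degree 1 has degree at
least 3. Operation `O₁` raises only the degree of `v'`, by one, and adds vertices of degrees
3, 3, 3, 2, 2 whose degree-2 vertices see only degree-3 vertices. So a new vertex of degree 1
never appears, and a new pair of adjacent degree-2 vertices could only arise from a leaf `v'`,
whose neighbour has degree at least 3.
-/

lemma deg_eq_degree {V : Type*} [Fintype V] (G : SimpleGraph V) [DecidableRel G.Adj] (v : V) :
    deg G v = G.degree v := by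
  rw [deg, Set.ncard_eq_toFinset_card', ← neighborFinset_def, card_neighborFinset_eq_degree]

lemma deg_iso {V W : Type*} {G : SimpleGraph V} {H : SimpleGraph W} (e : G ≃g H) (v : V) :
    deg H (e v) = deg G v := by
  rw [deg, deg, ← Nat.card_coe_set_eq, ← Nat.card_coe_set_eq]
  exact Nat.card_congr (e.mapNeighborSet v).symm

section AddK23

variable {V : Type*} (G : SimpleGraph V) (v' : V) (t : Fin 3)

@[simp] lemma addK23_adj_inl_inl (a b : V) :
    (addK23 G v' t).Adj (.inl a) (.inl b) ↔ G.Adj a b := by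
  simp +contextual [addK23, G.adj_comm b a, G.ne_of_adj]

@[simp] lemma addK23_not_adj_inl_inr_inl (a : V) (i : Fin 2) :
    ¬ (addK23 G v' t).Adj (.inl a) (.inr (.inl i)) := by
  simp [addK23]

@[simp] lemma addK23_adj_inl_inr_inr (a : V) (j : Fin 3) :
    (addK23 G v' t).Adj (.inl a) (.inr (.inr j)) ↔ a = v' ∧ j = t := by
  simp [addK23, eq_comm]

@[simp] lemma addK23_not_adj_inr_inl_inr_inl (i i' : Fin 2) :
    ¬ (addK23 G v' t).Adj (.inr (.inl i)) (.inr (.inl i')) := by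
  simp [addK23]

@[simp] lemma addK23_adj_inr_inl_inr_inr (i : Fin 2) (j : Fin 3) :
    (addK23 G v' t).Adj (.inr (.inl i)) (.inr (.inr j)) := by
  simp [addK23, -Fin.exists_fin_two]

@[simp] lemma addK23_not_adj_inr_inr_inr_inr (j j' : Fin 3) :
    ¬ (addK23 G v' t).Adj (.inr (.inr j)) (.inr (.inr j')) := by
  simp [addK23]

lemma neighborSet_addK23_inl_of_ne {a : V} (ha : a ≠ v') :
    (addK23 G v' t).neighborSet (.inl a) = .inl '' G.neighborSet a := by
  ext (b | i | j) <;> simp [ha]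

lemma neighborSet_addK23_inl_self :
    (addK23 G v' t).neighborSet (.inl v') =
      insert (.inr (.inr t)) (.inl '' G.neighborSet v') := by
  ext (b | i | j) <;> simp [eq_comm]

lemma neighborSet_addK23_inr_inl (i : Fin 2) :
    (addK23 G v' t).neighborSet (.inr (.inl i)) = Set.range (.inr ∘ .inr) := by
  ext (b | i | j) <;> simp [adj_comm]

lemma neighborSet_addK23_inr_inr_of_ne {j : Fin 3} (hj : j ≠ t) :
    (addK23 G v' t).neighborSet (.inr (.inr j)) = Set.range (.inr ∘ .inl) := by
  ext (b | i | j) <;> simp [adj_comm, hj]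

lemma neighborSet_addK23_inr_inr_self :
    (addK23 G v' t).neighborSet (.inr (.inr t)) =
      insert (.inl v') (Set.range (.inr ∘ .inl)) := by
  ext (b | i | j) <;> simp [adj_comm, eq_comm]

lemma deg_addK23_inl_of_ne {a : V} (ha : a ≠ v') :
    deg (addK23 G v' t) (.inl a) = deg G a := by
  rw [deg, neighborSet_addK23_inl_of_ne G v' t ha,
    Set.ncard_image_of_injective _ Sum.inl_injective, deg]

lemma deg_addK23_inl_self [Finite V] : deg (addK23 G v' t) (.inl v') = deg G v' + 1 := by
  rw [deg, neighborSet_addK23_inl_self, Set.ncard_insert_of_notMem (by simp) (Set.toFinite _),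
    Set.ncard_image_of_injective _ Sum.inl_injective, deg]

lemma deg_addK23_inr_inl (i : Fin 2) : deg (addK23 G v' t) (.inr (.inl i)) = 3 := by
  rw [deg, neighborSet_addK23_inr_inl, Set.ncard_range_of_injective (by intro; simp)]
  simp

lemma deg_addK23_inr_inr_of_ne {j : Fin 3} (hj : j ≠ t) :
    deg (addK23 G v' t) (.inr (.inr j)) = 2 := by
  rw [deg, neighborSet_addK23_inr_inr_of_ne G v' t hj,
    Set.ncard_range_of_injective (by intro; simp)]
  simp

lemma deg_addK23_inr_inr_self : deg (addK23 G v' t) (.inr (.inr t)) = 3 := by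
  rw [deg, neighborSet_addK23_inr_inr_self,
    Set.ncard_insert_of_notMem (by simp) (Set.toFinite _),
    Set.ncard_range_of_injective (by intro; simp)]
  simp

lemma two_le_deg_addK23_inr (x : Fin 2 ⊕ Fin 3) : 2 ≤ deg (addK23 G v' t) (.inr x) := by
  rcases x with i | j
  · simp [deg_addK23_inr_inl]
  · rcases eq_or_ne j t with rfl | hj
    · simp [deg_addK23_inr_inr_self]
    · simp [deg_addK23_inr_inr_of_ne G v' t hj]

lemma deg_le_deg_addK23_inl [Finite V] (a : V) : deg G a ≤ deg (addK23 G v' t) (.inl a) := by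
  rcases eq_or_ne a v' with rfl | ha
  · simp [deg_addK23_inl_self]
  · simp [deg_addK23_inl_of_ne G v' t ha]

end AddK23

structure DegreeInvariant {V : Type*} (G : SimpleGraph V) : Prop where
  finite : Finite V
  one_le_deg : ∀ v, 1 ≤ deg G v
  subsingleton_deg_eq_one : {v | deg G v = 1}.Subsingleton
  three_le_deg_of_adj : ∀ ⦃u v⦄, G.Adj u v → deg G u = 1 → 3 ≤ deg G v
  not_deg_eq_two_of_adj : ∀ u v, G.Adj u v → ¬ (deg G u = 2 ∧ deg G v = 2)

instance : DecidableRel baseGraph.Adj := fun a b =>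
  decidable_of_iff _ (fromRel_adj _ a b).symm

lemma degreeInvariant_baseGraph : DegreeInvariant baseGraph := by
  refine ⟨inferInstance, ?_, ?_, ?_, ?_⟩ <;> simp only [deg_eq_degree] <;> decide

namespace DegreeInvariant

variable {V : Type*} {G : SimpleGraph V}

lemma exists_inl_of_deg_addK23_eq_one (hG : DegreeInvariant G) (v' : V) (t : Fin 3)
    {x : V ⊕ (Fin 2 ⊕ Fin 3)} (hx : deg (addK23 G v' t) x = 1) :
    ∃ a, x = .inl a ∧ a ≠ v' ∧ deg G a = 1 := by
  have := hG.finite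
  rcases x with a | x
  · rcases eq_or_ne a v' with rfl | ha
    · have := hG.one_le_deg a
      rw [deg_addK23_inl_self] at hx
      omega
    · exact ⟨a, rfl, ha, by rwa [deg_addK23_inl_of_ne G v' t ha] at hx⟩
  · have := two_le_deg_addK23_inr G v' t x
    omega

lemma deg_eq_two_of_deg_addK23_eq_two (hG : DegreeInvariant G) (v' : V) (t : Fin 3) {a b : V}
    (hab : G.Adj a b) (ha : deg (addK23 G v' t) (.inl a) = 2)
    (hb : deg (addK23 G v' t) (.inl b) = 2) : deg G a = 2 := by
  have := hG.finite
  rcases eq_or_ne a v' with rfl | ha'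
  · rw [deg_addK23_inl_self] at ha
    have := (hG.three_le_deg_of_adj hab (by omega)).trans (deg_le_deg_addK23_inl G a t b)
    omega
  · rwa [deg_addK23_inl_of_ne G v' t ha'] at ha

lemma not_deg_addK23_eq_two_of_adj (hG : DegreeInvariant G) (v' : V) (t : Fin 3)
    {x y : V ⊕ (Fin 2 ⊕ Fin 3)} (hxy : (addK23 G v' t).Adj x y)
    (hx : deg (addK23 G v' t) x = 2) (hy : deg (addK23 G v' t) y = 2) : False := by
  have := hG.finite
  rcases x with a | (i | j) <;> rcases y with b | (i' | j')
  · rw [addK23_adj_inl_inl] at hxy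
    exact hG.not_deg_eq_two_of_adj a b hxy
      ⟨hG.deg_eq_two_of_deg_addK23_eq_two v' t hxy hx hy,
        hG.deg_eq_two_of_deg_addK23_eq_two v' t hxy.symm hy hx⟩
  -- every other adjacent pair contains a vertex of degree 3 or is not adjacent at all
  all_goals simp_all [deg_addK23_inr_inl, deg_addK23_inr_inr_self, adj_comm]

lemma addK23 (hG : DegreeInvariant G) (v' : V) (t : Fin 3) :
    DegreeInvariant (addK23 G v' t) := by
  have := hG.finite
  refine ⟨inferInstance, ?_, ?_, ?_, ?_⟩
  · rintro (a | x)
    · exact (hG.one_le_deg a).trans (deg_le_deg_addK23_inl G v' t a)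
    · exact one_le_two.trans (two_le_deg_addK23_inr G v' t x)
  · intro x hx y hy
    obtain ⟨a, rfl, -, ha⟩ := hG.exists_inl_of_deg_addK23_eq_one v' t hx
    obtain ⟨b, rfl, -, hb⟩ := hG.exists_inl_of_deg_addK23_eq_one v' t hy
    rw [hG.subsingleton_deg_eq_one ha hb]
  · intro x y hxy hx
    obtain ⟨a, rfl, ha', ha⟩ := hG.exists_inl_of_deg_addK23_eq_one v' t hx
    rcases y with b | (i | j)
    · rw [addK23_adj_inl_inl] at hxy
      exact (hG.three_le_deg_of_adj hxy ha).trans (deg_le_deg_addK23_inl G v' t b)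
    · simp at hxy
    · simp [ha'] at hxy
  · exact fun x y hxy h => hG.not_deg_addK23_eq_two_of_adj v' t hxy h.1 h.2

lemma of_iso {W : Type*} {H : SimpleGraph W} (e : G ≃g H) (hG : DegreeInvariant G) :
    DegreeInvariant H := by
  have := hG.finite
  have hdeg (w : W) : deg H w = deg G (e.symm w) := by
    rw [← deg_iso e, e.apply_symm_apply]
  refine ⟨.of_equiv V e.toEquiv, fun w => hdeg w ▸ hG.one_le_deg _, ?_, ?_, ?_⟩
  · intro x hx y hy
    simp only [Set.mem_ofPred_eq, hdeg] at hx hy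
    exact e.symm.injective (hG.subsingleton_deg_eq_one hx hy)
  · intro u v huv
    simpa only [hdeg] using hG.three_le_deg_of_adj (e.symm.map_adj_iff.mpr huv)
  · intro u v huv
    simpa only [hdeg] using hG.not_deg_eq_two_of_adj _ _ (e.symm.map_adj_iff.mpr huv)

end DegreeInvariant

lemma FamilyB.degreeInvariant {V : Type} {G : SimpleGraph V} (hG : FamilyB G) :
    DegreeInvariant G := by
  induction hG with
  | base => exact degreeInvariant_baseGraph
  | extend _ v' _ t ih => exact ih.addK23 v' t
  | iso e _ ih => exact ih.of_iso e

/-- **Proposition cB(f).** Every graph `G ∈ 𝓑` contains at most one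
vertex of degree 1, and no two adjacent vertices of `G` both have degree 2 in `G`. -/
theorem statement12 {V : Type} (G : SimpleGraph V) (hG : FamilyB G) :
    {v | deg G v = 1}.Subsingleton ∧
      ∀ u v : V, G.Adj u v → ¬ (deg G u = 2 ∧ deg G v = 2) :=
  ⟨hG.degreeInvariant.subsingleton_deg_eq_one, hG.degreeInvariant.not_deg_eq_two_of_adj⟩

end PaperIndepDom
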